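/- Let N ≥ 3, let z, a, b ∈ ℝ and α, β ∈ ℝ^{N−1}, and let H = H^{(N+1)}(z,a,b,α,β). Suppose m₀, m_N, d are positive reals such that Θ = diag(m₀, d, …, d, m_N) satisfies Hᵀ Θ = Θ H. If α₁ ≠ 1, then m₀ · m_N = d². -/
import Mathlib


open Matrix

/-- The tridiagonal discrete Laplacian over `ℝ`. -/
def TmatR (n : ℕ) : Matrix (Fin n) (Fin n) ℝ := fun i j =>
  if (i : ℕ) = (j : ℕ) then 2
  else if (i : ℕ) + 1 = (j : ℕ) ∨ (j : ℕ) + 1 = (i : ℕ) then -1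
  else 0

/-- The real nonlocal boundary interaction matrix `V`. -/
def VmatR (N : ℕ) (z a b : ℝ) (α β : ℕ → ℝ) :
    Matrix (Fin (N + 1)) (Fin (N + 1)) ℝ := fun i j =>
  if (i : ℕ) = 0 ∧ (j : ℕ) = 0 then -z
  else if (i : ℕ) = N ∧ (j : ℕ) = N then -z
  else if (i : ℕ) = 0 ∧ (j : ℕ) = N then b
  else if (i : ℕ) = N ∧ (j : ℕ) = 0 then a
  else if (i : ℕ) = 0 then β (N - (j : ℕ))
  else if (j : ℕ) = 0 then α (i : ℕ)
  else if (j : ℕ) = N then β (i : ℕ)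
  else if (i : ℕ) = N then α (N - (j : ℕ))
  else 0

/-- The real Hamiltonian `H^{(N+1)}(z,a,b,α,β) = T + V`. -/
def HmatR (N : ℕ) (z a b : ℝ) (α β : ℕ → ℝ) :
    Matrix (Fin (N + 1)) (Fin (N + 1)) ℝ :=
  TmatR (N + 1) + VmatR N z a b α β

/-- if `Θ = diag(m₀, d, …, d, m_N)` with positive entries
intertwines `Hᵀ` and `H` and `α₁ ≠ 1`, then `m₀ m_N = d²`. -/
theorem diagonal_metric_determinant_relation
    (N : ℕ) (hN : 3 ≤ N) (z a b : ℝ) (α β : ℕ → ℝ)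
    (m₀ mN d : ℝ) (hm₀ : 0 < m₀) (hmN : 0 < mN) (hd : 0 < d)
    (Θ : Matrix (Fin (N + 1)) (Fin (N + 1)) ℝ)
    (hΘ : Θ = Matrix.diagonal (fun i : Fin (N + 1) =>
      if (i : ℕ) = 0 then m₀ else if (i : ℕ) = N then mN else d))
    (hint : (HmatR N z a b α β)ᵀ * Θ = Θ * HmatR N z a b α β)
    (hα : α 1 ≠ 1) :
    m₀ * mN = d ^ 2 := by
  subst hΘ
  set H := HmatR N z a b α β with hH
  have key : ∀ i j : Fin (N+1), H j i *
      (if (j : ℕ) = 0 then m₀ else if (j : ℕ) = N then mN else d) =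
      (if (i : ℕ) = 0 then m₀ else if (i : ℕ) = N then mN else d) * H i j := by
    intro i j
    have := congrFun (congrFun hint i) j
    simpa [Matrix.mul_diagonal, Matrix.diagonal_mul, Matrix.transpose_apply] using this
  have h10 : (1:ℕ) ≠ 0 := by omega
  have h1N : (1:ℕ) ≠ N := by omega
  have hN10 : N - 1 ≠ 0 := by omega
  have hN1N : N - 1 ≠ N := by omega
  have hN0 : N ≠ 0 := by omega
  have hNN1 : N - (N-1) = 1 := by omega
  have hsub : ¬ (N - 1 + 1 = N ∧ False) := by simp
  -- entry values
  have e01 : H 0 ⟨1, by omega⟩ = -1 + β (N - 1) := by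
    simp [hH, HmatR, TmatR, VmatR, Matrix.add_apply, h10, Ne.symm h10, h1N, hN0]
  have e10 : H ⟨1, by omega⟩ 0 = -1 + α 1 := by
    simp [hH, HmatR, TmatR, VmatR, Matrix.add_apply, h10, h1N, hN0]
  have eN1N : H ⟨N-1, by omega⟩ ⟨N, by omega⟩ = -1 + β (N - 1) := by
    have : N - 1 + 1 = N := by omega
    simp [hH, HmatR, TmatR, VmatR, Matrix.add_apply, hN10, hN1N, hN0, this]
  have eNN1 : H ⟨N, by omega⟩ ⟨N-1, by omega⟩ = -1 + α 1 := by
    have : N - 1 + 1 = N := by omega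
    simp [hH, HmatR, TmatR, VmatR, Matrix.add_apply, hN10, hN1N, hN0, this, hNN1,
      Ne.symm hN1N]
  have k1 := key 0 ⟨1, by omega⟩
  have k2 := key ⟨N-1, by omega⟩ ⟨N, by omega⟩
  simp only [e01, e10, eN1N, eNN1, Fin.val_mk, Fin.val_zero, if_pos rfl,
    if_neg h10, if_neg h1N, if_neg hN10, if_neg hN1N, if_neg hN0, if_pos rfl] at k1 k2
  simp only [if_true] at k1 k2
  -- k1 : (-1 + α 1) * d = m₀ * (-1 + β (N-1))
  -- k2 : (-1 + α 1) * mN = d * (-1 + β (N-1))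
  have hp : α 1 - 1 ≠ 0 := sub_ne_zero.mpr hα
  have : (α 1 - 1) * (m₀ * mN - d ^ 2) = 0 := by nlinarith [k1, k2]
  have := mul_eq_zero.mp this
  rcases this with h | h
  · exact absurd h hp
  · linarith
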